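/- arXiv:0908.3954 — 2 statements merged into one kernel-verified Lean document; each statement's English description precedes it below -/
import Mathlib

section
/- For interval matrices [A] ∈ 𝕀ℝ^{n×m} and [B] ∈ 𝕀ℝ^{m×p}, the interval matrix product defined entrywise by ([A][B])_{ij} = ∑_k [a_{ik}][b_{kj}] (using interval arithmetic) equals the interval hull of the set {AB : A ∈ [A], B ∈ [B]}. -/
open Pointwise

/-- The interval matrix `[A] = {A : A̲ ≤ A ≤ Ā}` (componentwise inequalities). -/
def Imat {n m : ℕ} (lo hi : Matrix (Fin n) (Fin m) ℝ) : Set (Matrix (Fin n) (Fin m) ℝ) :=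
  {A | ∀ i j, A i j ∈ Set.Icc (lo i j) (hi i j)}

/-!
The set `{(AB)ᵢⱼ : A ∈ [A], B ∈ [B]}` is exactly the Minkowski sum `∑ₖ [aᵢₖ]·[bₖⱼ]`, because the
summands `aᵢₖ bₖⱼ` involve pairwise distinct entries of `A` and `B`, which can be chosen
independently. Each `[aᵢₖ]·[bₖⱼ]` is a continuous image of a rectangle, hence compact and
connected, and so is their sum; a compact connected subset of `ℝ` is the interval between its
infimum and supremum.
-/

section MinkowskiSum

variable {α β γ : Type*} [TopologicalSpace α] [TopologicalSpace β] [TopologicalSpace γ]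

theorem IsConnected.image2 {f : α → β → γ} (hf : Continuous (Function.uncurry f)) {s : Set α}
    {t : Set β} (hs : IsConnected s) (ht : IsConnected t) : IsConnected (Set.image2 f s t) := by
  rw [← Set.image_prod]
  exact (hs.prod ht).image _ hf.continuousOn

theorem IsCompact.image2 {f : α → β → γ} (hf : Continuous (Function.uncurry f)) {s : Set α}
    {t : Set β} (hs : IsCompact s) (ht : IsCompact t) : IsCompact (Set.image2 f s t) := by
  rw [← Set.image_prod]
  exact (hs.prod ht).image hf

variable {ι M : Type*} [AddCommMonoid M] [TopologicalSpace M] [ContinuousAdd M]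

theorem isConnected_finsetSum (s : Finset ι) {t : ι → Set M} (ht : ∀ k ∈ s, IsConnected (t k)) :
    IsConnected (∑ k ∈ s, t k) := by
  induction s using Finset.cons_induction with
  | empty => exact isConnected_singleton
  | cons a s ha ih =>
    rw [Finset.sum_cons, ← Set.image2_add]
    exact (ht a (s.mem_cons_self a)).image2 continuous_add
      (ih fun k hk ↦ ht k (Finset.mem_cons_of_mem hk))

theorem isCompact_finsetSum (s : Finset ι) {t : ι → Set M} (ht : ∀ k ∈ s, IsCompact (t k)) :
    IsCompact (∑ k ∈ s, t k) := by
  induction s using Finset.cons_induction with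
  | empty => exact isCompact_singleton
  | cons a s ha ih =>
    rw [Finset.sum_cons]
    exact (ht a (s.mem_cons_self a)).add (ih fun k hk ↦ ht k (Finset.mem_cons_of_mem hk))

end MinkowskiSum

theorem setOf_mul_apply_eq_sum_image2 {n m p : ℕ}
    {Alo Ahi : Matrix (Fin n) (Fin m) ℝ} {Blo Bhi : Matrix (Fin m) (Fin p) ℝ}
    (hA : ∀ i j, Alo i j ≤ Ahi i j) (hB : ∀ i j, Blo i j ≤ Bhi i j) (i : Fin n) (j : Fin p) :
    {x : ℝ | ∃ A ∈ Imat Alo Ahi, ∃ B ∈ Imat Blo Bhi, x = (A * B) i j} =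
      ∑ k : Fin m, Set.image2 (· * ·) (Set.Icc (Alo i k) (Ahi i k))
        (Set.Icc (Blo k j) (Bhi k j)) := by
  ext x
  constructor
  · rintro ⟨A, hAmem, B, hBmem, rfl⟩
    exact Set.finsetSum_mem_finsetSum _ _ _ fun k _ ↦
      Set.mem_image2_of_mem (hAmem i k) (hBmem k j)
  · intro hx
    obtain ⟨g, hg, rfl⟩ := (Set.mem_finsetSum _ _ _).1 hx
    choose a ha b hb hab using fun k ↦ hg (Finset.mem_univ k)
    refine ⟨Alo.updateRow i a, fun i' k ↦ ?_, Blo.updateCol j b, fun k j' ↦ ?_, ?_⟩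
    · rw [Matrix.updateRow_apply]
      split_ifs with h
      · exact h ▸ ha k
      · exact Set.left_mem_Icc.2 (hA i' k)
    · rw [Matrix.updateCol_apply]
      split_ifs with h
      · exact h ▸ hb k
      · exact Set.left_mem_Icc.2 (hB k j')
    · simp [Matrix.mul_apply, hab]

/-- The interval matrix product, computed entrywise by interval arithmetic as
`([A][B])_{ij} = ∑ₖ [a_{ik}]·[b_{kj}]` (setwise interval products and Minkowski sums),
equals the interval hull of `{AB : A ∈ [A], B ∈ [B]}`: entrywise, it is the smallest
closed interval containing `{(AB)_{ij} : A ∈ [A], B ∈ [B]}`. -/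
theorem interval_matrix_product_eq_hull (n m p : ℕ)
    (Alo Ahi : Matrix (Fin n) (Fin m) ℝ) (Blo Bhi : Matrix (Fin m) (Fin p) ℝ)
    (hA : ∀ i j, Alo i j ≤ Ahi i j) (hB : ∀ i j, Blo i j ≤ Bhi i j)
    (i : Fin n) (j : Fin p) :
    ∑ k : Fin m, Set.image2 (· * ·) (Set.Icc (Alo i k) (Ahi i k))
        (Set.Icc (Blo k j) (Bhi k j)) =
      Set.Icc
        (sInf {x : ℝ | ∃ A ∈ Imat Alo Ahi, ∃ B ∈ Imat Blo Bhi, x = (A * B) i j})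
        (sSup {x : ℝ | ∃ A ∈ Imat Alo Ahi, ∃ B ∈ Imat Blo Bhi, x = (A * B) i j}) := by
  rw [setOf_mul_apply_eq_sum_image2 hA hB i j]
  refine eq_Icc_of_connected_compact ?_ ?_
  · exact isConnected_finsetSum _ fun k _ ↦
      (isConnected_Icc (hA i k)).image2 continuous_mul (isConnected_Icc (hB k j))
  · exact isCompact_finsetSum _ fun k _ ↦
      isCompact_Icc.image2 continuous_mul isCompact_Icc
end

section
/- Taylor enclosure theorem: let [A] be an interval matrix in ℝ^{n×n} and K ∈ ℕ with K+2 > ‖[A]‖. Then for every A ∈ [A], exp(A) belongs to the interval matrix [T]([A],K) := I + [A] + (1/2)[A]² + ... + (1/K!)[A]^K + ρ(‖[A]‖,K)·[−E,E], where powers [A]^k are computed by iterated interval matrix multiplication. -/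
open Pointwise

attribute [local instance] Matrix.linftyOpNormedRing Matrix.linftyOpNormedAlgebra

/-- The matrix exponential, defined by its power series. -/
noncomputable def expM {n : ℕ} (A : Matrix (Fin n) (Fin n) ℝ) : Matrix (Fin n) (Fin n) ℝ :=
  ∑' k : ℕ, (k.factorial : ℝ)⁻¹ • A ^ k

/-- The truncation error bound `ρ(α,K) = α^(K+1) / ((K+1)!·(1 − α/(K+2)))`. -/
noncomputable def rho (α : ℝ) (K : ℕ) : ℝ :=
  α ^ (K + 1) / ((K + 1).factorial * (1 - α / (K + 2)))

/-- An interval matrix, given entrywise by subsets (intervals) of `ℝ`. -/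
abbrev IMat (n : ℕ) := Matrix (Fin n) (Fin n) (Set ℝ)

/-- The interval matrix `[A̲, Ā]` with entries `[a̲_{ij}, ā_{ij}]`. -/
def ofBounds {n : ℕ} (lo hi : Matrix (Fin n) (Fin n) ℝ) : IMat n :=
  fun i j => Set.Icc (lo i j) (hi i j)

/-- Membership of a real matrix in an interval matrix (entrywise membership). -/
def memI {n : ℕ} (M : Matrix (Fin n) (Fin n) ℝ) (A : IMat n) : Prop :=
  ∀ i j, M i j ∈ A i j

/-- Entrywise interval matrix addition (setwise interval addition). -/
def iadd {n : ℕ} (A B : IMat n) : IMat n := fun i j => A i j + B i j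

/-- Scalar multiple of an interval matrix (setwise). -/
def ismul {n : ℕ} (c : ℝ) (A : IMat n) : IMat n := fun i j => c • A i j

/-- Interval matrix product: `([A][B])_{ij} = ∑ₖ [a_{ik}]·[b_{kj}]`, where interval
products are setwise and sums are Minkowski sums (interval arithmetic). -/
def imul {n : ℕ} (A B : IMat n) : IMat n :=
  fun i j => ∑ k : Fin n, Set.image2 (· * ·) (A i k) (B k j)

/-- The degenerate (point) interval identity matrix. -/
def iId (n : ℕ) : IMat n := fun i j => {(1 : Matrix (Fin n) (Fin n) ℝ) i j}

/-- Interval matrix powers, computed by iterated interval matrix multiplication. -/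
def ipow {n : ℕ} (A : IMat n) : ℕ → IMat n
  | 0 => iId n
  | k + 1 => imul (ipow A k) A

/-- The norm of an interval matrix: `‖[A]‖ = sup{‖A‖_∞ : A ∈ [A]}`. -/
noncomputable def intervalNorm {n : ℕ} (lo hi : Matrix (Fin n) (Fin n) ℝ) : ℝ :=
   sSup ((fun M => ‖M‖) '' {A : Matrix (Fin n) (Fin n) ℝ | ∀ i j, A i j ∈ Set.Icc (lo i j) (hi i j)})

/-! Interval arithmetic is inclusion isotone, so every power `A ^ k` of a member `A ∈ [A]`
lies in the interval power `[A]^k`, and the Taylor polynomial of `exp A` lies in that of `[A]`.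
The tail `∑_{k > K} A^k / k!` is bounded in the `∞`-operator norm by
`(α^(K+1) / (K+1)!) ∑_m (α / (K+2))^m = ρ(α, K)`, where `‖A‖ ≤ α = ‖[A]‖`, since
`(K+1)! (K+2)^m ≤ (K+1+m)!`; every entry of a matrix is bounded by that norm. -/

section LinftyNorm

attribute [local instance] Matrix.linftyOpSeminormedAddCommGroup

theorem Matrix.norm_entry_le_linfty_opNorm {m n α : Type*} [Fintype m] [Fintype n]
    [SeminormedAddCommGroup α] (A : Matrix m n α) (i : m) (j : n) : ‖A i j‖ ≤ ‖A‖ := by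
  have : ‖A i j‖₊ ≤ ‖A‖₊ := by
    rw [Matrix.linfty_opNNNorm_def]
    exact (Finset.single_le_sum (fun _ _ => zero_le) (Finset.mem_univ j)).trans
      (Finset.le_sup (f := fun i => ∑ j, ‖A i j‖₊) (Finset.mem_univ i))
  exact_mod_cast this

end LinftyNorm

theorem isCompact_setOf_forall_mem_Icc {m n : Type*} (lo hi : Matrix m n ℝ) :
    IsCompact {A : Matrix m n ℝ | ∀ i j, A i j ∈ Set.Icc (lo i j) (hi i j)} := by
  have hbox : {A : Matrix m n ℝ | ∀ i j, A i j ∈ Set.Icc (lo i j) (hi i j)} =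
      Set.univ.pi fun i => Set.univ.pi fun j => Set.Icc (lo i j) (hi i j) := by
    ext A
    exact ⟨fun h i _ j _ => h i j, fun h i j => h i trivial j trivial⟩
  rw [hbox]
  exact isCompact_univ_pi fun _ => isCompact_univ_pi fun _ => isCompact_Icc

theorem norm_le_intervalNorm {n : ℕ} {lo hi A : Matrix (Fin n) (Fin n) ℝ}
    (hA : ∀ i j, A i j ∈ Set.Icc (lo i j) (hi i j)) : ‖A‖ ≤ intervalNorm lo hi :=
  le_csSup ((isCompact_setOf_forall_mem_Icc lo hi).image continuous_norm).bddAbove ⟨A, hA, rfl⟩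

section IntervalArithmetic

variable {n : ℕ} {A C : Matrix (Fin n) (Fin n) ℝ} {B D : IMat n}

theorem memI_one_iId : memI (1 : Matrix (Fin n) (Fin n) ℝ) (iId n) := fun _ _ => rfl

theorem memI.mul (hA : memI A B) (hC : memI C D) : memI (A * C) (imul B D) := fun i j => by
  rw [Matrix.mul_apply]
  exact Set.finsetSum_mem_finsetSum _ _ _ fun k _ => Set.mem_image2_of_mem (hA i k) (hC k j)

theorem memI.pow (hA : memI A B) : ∀ k, memI (A ^ k) (ipow B k)
  | 0 => memI_one_iId
  | k + 1 => by
    rw [pow_succ]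
    exact (hA.pow k).mul hA

theorem memI.sum_smul_pow (hA : memI A B) (c : ℕ → ℝ) (s : Finset ℕ) :
    memI (∑ k ∈ s, c k • A ^ k) (fun i j => ∑ k ∈ s, c k • ipow B k i j) := by
  intro i j
  simp only [Matrix.sum_apply, Matrix.smul_apply]
  exact Set.finsetSum_mem_finsetSum _ _ _ fun k _ => Set.smul_mem_smul_set (hA.pow k i j)

end IntervalArithmetic

theorem mem_smul_Icc_neg_one_one {x ρ : ℝ} (h : |x| ≤ ρ) :
    x ∈ ρ • Set.Icc (-1 : ℝ) 1 := by
  rcases ((abs_nonneg x).trans h).eq_or_lt with hρ | hρ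
  · obtain rfl : x = 0 := abs_nonpos_iff.mp (hρ ▸ h)
    exact ⟨0, by norm_num, by simp⟩
  · rw [LinearOrderedField.smul_Icc hρ, mul_neg_one, mul_one]
    exact abs_le.mp h

theorem hasSum_rho {α : ℝ} {K : ℕ} (hα : 0 ≤ α) (hK : α < K + 2) :
    HasSum (fun m : ℕ => α ^ (K + 1) / (K + 1).factorial * (α / (K + 2)) ^ m) (rho α K) := by
  have hK0 : (0 : ℝ) < K + 2 := by positivity
  have hr1 : α / (K + 2) < 1 := (div_lt_one hK0).2 hK
  have := (hasSum_geometric_of_lt_one (div_nonneg hα hK0.le) hr1).mul_left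
    (α ^ (K + 1) / (K + 1).factorial)
  rwa [← div_eq_mul_inv, div_div] at this

section ExpTail

variable {𝔸 : Type*} [NormedRing 𝔸] [NormedAlgebra ℝ 𝔸] {a : 𝔸} {α : ℝ}

theorem norm_factorial_inv_smul_pow_le (ha : ‖a‖ ≤ α) (K m : ℕ) :
    ‖((m + (K + 1)).factorial : ℝ)⁻¹ • a ^ (m + (K + 1))‖ ≤
      α ^ (K + 1) / (K + 1).factorial * (α / (K + 2)) ^ m := by
  have hα : 0 ≤ α := (norm_nonneg a).trans ha
  have hfact : ((K + 1).factorial : ℝ) * ((K : ℝ) + 2) ^ m ≤ (m + (K + 1)).factorial := by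
    rw [add_comm m]
    exact_mod_cast Nat.factorial_mul_pow_le_factorial
  calc ‖((m + (K + 1)).factorial : ℝ)⁻¹ • a ^ (m + (K + 1))‖
      ≤ ((m + (K + 1)).factorial : ℝ)⁻¹ * α ^ (m + (K + 1)) := by
        rw [norm_smul, norm_inv, RCLike.norm_natCast]
        gcongr
        exact (norm_pow_le' a (by omega)).trans (pow_le_pow_left₀ (norm_nonneg a) ha _)
    _ ≤ (((K + 1).factorial : ℝ) * ((K : ℝ) + 2) ^ m)⁻¹ * α ^ (m + (K + 1)) := by
        gcongr
    _ = α ^ (K + 1) / (K + 1).factorial * (α / (K + 2)) ^ m := by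
        rw [pow_add, div_pow, mul_inv]
        ring

theorem norm_tsum_factorial_inv_smul_pow_le (ha : ‖a‖ ≤ α) {K : ℕ} (hK : α < K + 2) :
    ‖∑' m : ℕ, ((m + (K + 1)).factorial : ℝ)⁻¹ • a ^ (m + (K + 1))‖ ≤ rho α K :=
  tsum_of_norm_bounded (hasSum_rho ((norm_nonneg a).trans ha) hK)
    (norm_factorial_inv_smul_pow_le ha K)

end ExpTail

theorem expM_eq_sum_add_tsum {n : ℕ} (A : Matrix (Fin n) (Fin n) ℝ) (N : ℕ) :
    expM A = ∑ k ∈ Finset.range N, (k.factorial : ℝ)⁻¹ • A ^ k +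
      ∑' m : ℕ, ((m + N).factorial : ℝ)⁻¹ • A ^ (m + N) :=
  ((NormedSpace.expSeries_summable' (𝕂 := ℝ) A).sum_add_tsum_nat_add N).symm

theorem taylor_interval_enclosure_general (n K : ℕ) (Alo Ahi : Matrix (Fin n) (Fin n) ℝ)
    (hK : intervalNorm Alo Ahi < (K : ℝ) + 2) :
    ∀ A : Matrix (Fin n) (Fin n) ℝ, (∀ i j, A i j ∈ Set.Icc (Alo i j) (Ahi i j)) →
      memI (expM A)
        (iadd (fun i j => ∑ k ∈ Finset.range (K + 1),
            (k.factorial : ℝ)⁻¹ • (ipow (ofBounds Alo Ahi) k) i j)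
          (fun _ _ => rho (intervalNorm Alo Ahi) K • Set.Icc (-1 : ℝ) 1)) := by
  intro A hA i j
  rw [expM_eq_sum_add_tsum A (K + 1), Matrix.add_apply]
  refine Set.add_mem_add ?_ (mem_smul_Icc_neg_one_one ?_)
  · exact (memI.sum_smul_pow (B := ofBounds Alo Ahi) hA _ _) i j
  · rw [← Real.norm_eq_abs]
    exact (Matrix.norm_entry_le_linfty_opNorm _ i j).trans
      (norm_tsum_factorial_inv_smul_pow_le (norm_le_intervalNorm hA) hK)

/-- Taylor enclosure theorem: if `K + 2 > ‖[A]‖` then for every `A ∈ [A]`, `exp A`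
belongs to the interval matrix
`[T]([A],K) = I + [A] + (1/2)[A]² + ⋯ + (1/K!)[A]^K + ρ(‖[A]‖,K)·[−E,E]`,
computed with interval matrix arithmetic. -/
theorem taylor_interval_enclosure (n K : ℕ) (Alo Ahi : Matrix (Fin n) (Fin n) ℝ)
    (hA : ∀ i j, Alo i j ≤ Ahi i j)
    (hK : intervalNorm Alo Ahi < (K : ℝ) + 2) :
    ∀ A : Matrix (Fin n) (Fin n) ℝ, (∀ i j, A i j ∈ Set.Icc (Alo i j) (Ahi i j)) →
      memI (expM A)
        (iadd (fun i j => ∑ k ∈ Finset.range (K + 1),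
            (k.factorial : ℝ)⁻¹ • (ipow (ofBounds Alo Ahi) k) i j)
          (fun _ _ => rho (intervalNorm Alo Ahi) K • Set.Icc (-1 : ℝ) 1)) :=
  taylor_interval_enclosure_general n K Alo Ahi hK
end
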